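/- Let v > 0 and γ > 0, and define P(a) := (1/(πv)) ∫_{{z ∈ ℂ : |z| > γ}} exp(-|z-a|²/v) dν(z) for a ∈ ℂ, where ν is the Lebesgue measure on ℂ. Then inf over a ∈ ℂ of P(a) equals exp(-γ²/v), and this infimum is attained at a = 0. -/

import Mathlib

/-!
Superlevel sets of the Gaussian `exp (-‖z - a‖² / v)` are balls about `a`, so by the layer-cake
formula its mass outside the disc `closedBall 0 γ` is an integral over the levels `t` of
`vol (ball a ρₜ \ closedBall 0 γ)`. A ball about `0` contains the removed disc whenever it meets
its complement, while all balls of radius `ρₜ` have the same volume; hence every level, and so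
the whole integral, is smallest for `a = 0`. For `a = 0`, polar coordinates reduce the integral to
`2π ∫_γ^∞ r exp (-r² / v) dr = π v exp (-γ² / v)`.
-/

open MeasureTheory Metric Set Filter Real Topology

lemma setOf_lt_exp_neg_norm_sub_sq_div {E : Type*} [SeminormedAddCommGroup E] {v t : ℝ}
    (hv : 0 < v) (ht : 0 < t) (b : E) :
    {z : E | t < exp (-‖z - b‖ ^ 2 / v)} = ball b √(-(v * log t)) := by
  ext z
  rw [mem_ofPred_eq, mem_ball, dist_eq_norm, lt_sqrt (norm_nonneg _), ← log_lt_iff_lt_exp ht,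
    lt_div_iff₀ hv]
  constructor <;> intro h <;> linarith

section NormedGroup

variable {E : Type*} [NormedAddCommGroup E] [MeasurableSpace E] [BorelSpace E] (μ : Measure E)

lemma lintegral_compl_closedBall_exp_neg_norm_sub_sq_div {v : ℝ} (hv : 0 < v) (b : E) (γ : ℝ) :
    ∫⁻ z in (closedBall 0 γ)ᶜ, ENNReal.ofReal (exp (-‖z - b‖ ^ 2 / v)) ∂μ =
      ∫⁻ t in Ioi 0, μ (ball b √(-(v * log t)) \ closedBall 0 γ) := by
  rw [lintegral_eq_lintegral_meas_lt _ (ae_of_all _ fun z => (exp_pos _).le)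
    (by fun_prop : Continuous fun z : E => exp (-‖z - b‖ ^ 2 / v)).aemeasurable]
  refine setLIntegral_congr_fun measurableSet_Ioi fun t ht => ?_
  rw [setOf_lt_exp_neg_norm_sub_sq_div hv ht, Measure.restrict_apply measurableSet_ball,
    sdiff_eq]

variable [ProperSpace E] [μ.IsAddHaarMeasure]

lemma measure_ball_zero_diff_closedBall_le (a : E) (ρ γ : ℝ) :
    μ (ball 0 ρ \ closedBall 0 γ) ≤ μ (ball a ρ \ closedBall 0 γ) := by
  rcases le_or_gt ρ γ with hργ | hγρ
  · simp [sdiff_eq_empty.2 (ball_subset_closedBall.trans (closedBall_subset_closedBall hργ))]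
  · rw [measure_sdiff (closedBall_subset_ball hγρ) measurableSet_closedBall.nullMeasurableSet
      measure_closedBall_lt_top.ne, ← Measure.addHaar_ball_center μ a]
    exact le_measure_sdiff

lemma lintegral_compl_closedBall_exp_neg_norm_sq_div_le {v : ℝ} (hv : 0 < v) (a : E) (γ : ℝ) :
    ∫⁻ z in (closedBall 0 γ)ᶜ, ENNReal.ofReal (exp (-‖z‖ ^ 2 / v)) ∂μ ≤
      ∫⁻ z in (closedBall 0 γ)ᶜ, ENNReal.ofReal (exp (-‖z - a‖ ^ 2 / v)) ∂μ := by
  have h0 := lintegral_compl_closedBall_exp_neg_norm_sub_sq_div μ hv (0 : E) γ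
  simp only [sub_zero] at h0
  rw [h0, lintegral_compl_closedBall_exp_neg_norm_sub_sq_div μ hv a γ]
  exact lintegral_mono fun t => measure_ball_zero_diff_closedBall_le μ a _ γ

end NormedGroup

section InnerProductSpace

variable {V : Type*} [NormedAddCommGroup V] [InnerProductSpace ℝ V] [FiniteDimensional ℝ V]
  [MeasurableSpace V] [BorelSpace V]

lemma integrable_exp_neg_norm_sub_sq_div {v : ℝ} (hv : 0 < v) (a : V) :
    Integrable fun z : V => exp (-‖z - a‖ ^ 2 / v) := by
  have h := (GaussianFourier.integrable_cexp_neg_mul_sq_norm_add (V := V)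
    (b := ((1 / v : ℝ) : ℂ)) (by simpa using hv) 0 0).norm
  have h0 : Integrable fun z : V => exp (-‖z‖ ^ 2 / v) := by
    refine h.congr (ae_of_all _ fun z => ?_)
    simp only [zero_mul, add_zero, Complex.norm_exp]
    norm_cast
    ring_nf
  exact h0.comp_sub_right a

lemma setIntegral_compl_closedBall_exp_neg_norm_sq_div_le {v : ℝ} (hv : 0 < v) (a : V)
    (γ : ℝ) :
    ∫ z in (closedBall (0 : V) γ)ᶜ, exp (-‖z‖ ^ 2 / v) ≤
      ∫ z in (closedBall (0 : V) γ)ᶜ, exp (-‖z - a‖ ^ 2 / v) := by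
  have hnn (b : V) :
      0 ≤ᵐ[volume.restrict (closedBall 0 γ)ᶜ] fun z => exp (-‖z - b‖ ^ 2 / v) :=
    ae_of_all _ fun _ => (exp_pos _).le
  have h0 := ofReal_integral_eq_lintegral_ofReal
    (integrable_exp_neg_norm_sub_sq_div hv (0 : V)).integrableOn (hnn 0)
  simp only [sub_zero] at h0
  rw [← ENNReal.ofReal_le_ofReal_iff (integral_nonneg_of_ae (hnn a)), h0,
    ofReal_integral_eq_lintegral_ofReal (integrable_exp_neg_norm_sub_sq_div hv a).integrableOn
      (hnn a)]
  exact lintegral_compl_closedBall_exp_neg_norm_sq_div_le volume hv a γ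

end InnerProductSpace

lemma integral_Ioi_mul_exp_neg_sq_div {v : ℝ} (hv : 0 < v) (γ : ℝ) :
    ∫ r in Ioi γ, r * exp (-r ^ 2 / v) = v / 2 * exp (-γ ^ 2 / v) := by
  have hderiv : ∀ r ∈ Ioi γ,
      HasDerivAt (fun r => -(v / 2) * exp (-r ^ 2 / v)) (r * exp (-r ^ 2 / v)) r := by
    intro r _
    have h : HasDerivAt (fun r => -r ^ 2 / v) (-(2 * r) / v) r := by
      simpa using (hasDerivAt_pow 2 r).neg.div_const v
    refine (h.exp.const_mul (-(v / 2))).congr_deriv ?_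
    field_simp
  have hint : IntegrableOn (fun r => r * exp (-r ^ 2 / v)) (Ioi γ) := by
    refine (integrable_mul_exp_neg_mul_sq (one_div_pos.2 hv)).integrableOn.congr_fun
      (fun r _ => ?_) measurableSet_Ioi
    ring_nf
  have hlim : Tendsto (fun r => -(v / 2) * exp (-r ^ 2 / v)) atTop (𝓝 0) := by
    simpa using ((tendsto_exp_atBot.comp ((tendsto_neg_atBot_iff.2
      (tendsto_pow_atTop two_ne_zero)).atBot_div_const hv)).const_mul (-(v / 2)))
  rw [integral_Ioi_of_hasDerivAt_of_tendsto (by fun_prop) hderiv hint hlim]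
  ring

lemma Complex.setIntegral_compl_closedBall_exp_neg_norm_sq_div {v γ : ℝ} (hv : 0 < v)
    (hγ : 0 ≤ γ) :
    ∫ z in (closedBall (0 : ℂ) γ)ᶜ, rexp (-‖z‖ ^ 2 / v) = π * v * rexp (-γ ^ 2 / v) := by
  set g := (Ioi γ).indicator fun r => rexp (-r ^ 2 / v)
  have hradial : ((closedBall (0 : ℂ) γ)ᶜ.indicator fun z => rexp (-‖z‖ ^ 2 / v)) =
      fun z => g ‖z‖ := by
    ext z
    simp [g, indicator]
  have hshell : (fun r : ℝ => r ^ (Module.finrank ℝ ℂ - 1) • g r) =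
      (Ioi γ).indicator fun r => r * rexp (-r ^ 2 / v) := by
    ext r
    simp [g, indicator]
  have hdisc : (volume : Measure ℂ).real (ball 0 1) = π := by simp [measureReal_def]
  rw [← integral_indicator measurableSet_closedBall.compl, hradial, integral_fun_norm_addHaar,
    hshell, setIntegral_indicator measurableSet_Ioi, Ioi_inter_Ioi, max_eq_right hγ,
    integral_Ioi_mul_exp_neg_sq_div hv, hdisc, Complex.finrank_real_complex, nsmul_eq_mul,
    smul_eq_mul]
  ring

/-- The worst-case detection probability equals the false alarm rate: the infimum over
`a ∈ ℂ` of `P(a) = (1/(πv)) ∫_{|z|>γ} exp(-|z-a|²/v) dν(z)` is `exp(-γ²/v)`, attained at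
`a = 0`. -/
theorem worst_case_detection (v γ : ℝ) (hv : 0 < v) (hγ : 0 < γ) :
    IsLeast
      (Set.range fun a : ℂ => (1 / (Real.pi * v)) *
        ∫ z in {z : ℂ | γ < ‖z‖}, Real.exp (-‖z - a‖ ^ 2 / v))
      (Real.exp (-γ ^ 2 / v)) ∧
    (1 / (Real.pi * v)) *
        ∫ z in {z : ℂ | γ < ‖z‖}, Real.exp (-‖z - (0 : ℂ)‖ ^ 2 / v) =
      Real.exp (-γ ^ 2 / v) := by
  have hS : {z : ℂ | γ < ‖z‖} = (closedBall 0 γ)ᶜ := by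
    ext
    simp
  have hP0 : (1 / (π * v)) * ∫ z in {z : ℂ | γ < ‖z‖}, exp (-‖z - (0 : ℂ)‖ ^ 2 / v) =
      exp (-γ ^ 2 / v) := by
    simp only [hS, sub_zero, Complex.setIntegral_compl_closedBall_exp_neg_norm_sq_div hv hγ.le]
    field_simp
  refine ⟨⟨⟨0, hP0⟩, ?_⟩, hP0⟩
  rintro _ ⟨a, rfl⟩
  rw [← hP0]
  simp only [hS, sub_zero]
  exact mul_le_mul_of_nonneg_left (setIntegral_compl_closedBall_exp_neg_norm_sq_div_le hv a γ)
    (by positivity)
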